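/- arXiv:2401.01972 — 2 statements merged into one kernel-verified Lean document; each statement's English description precedes it below -/
import Mathlib

section
/- In the value iteration of the previous context, p_s^{(n)} equals the maximum over all Markov policies π : S × ℕ → U of the probability that the Markov chain induced by π, started at s, visits the target set B within n steps. -/
/-- Probability that the time-inhomogeneous Markov chain induced by Markov policy `π`
on a finite MDP `T`, started at `s`, visits the target set `B` within `n` steps:
a sum over paths of length `n+1` starting at `s` that hit `B`. -/
noncomputable def reachProb {S U : Type*} [Fintype S] [DecidableEq S] (n : ℕ)
    (T : S → U → S → ℝ) (B : Finset S) (π : S → ℕ → U) (s : S) : ℝ :=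
  ∑ ω ∈ Finset.univ.filter
      (fun ω : Fin (n + 1) → S => ω 0 = s ∧ ∃ k, ω k ∈ B),
    ∏ k : Fin n, T (ω k.castSucc) (π (ω k.castSucc) k) (ω k.succ)

section helpers
variable {S U : Type*} [Fintype S] [DecidableEq S]


variable {S U : Type*} [Fintype S] [DecidableEq S]

lemma step_sum (n : ℕ) (T : S → U → S → ℝ) (π : S → ℕ → U) (s : S)
    (P : (Fin (n + 1) → S) → Prop) [DecidablePred P] :
    ∑ ω ∈ Finset.univ.filter
        (fun ω : Fin (n + 1 + 1) → S => ω 0 = s ∧ P (Fin.tail ω)),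
      ∏ k : Fin (n + 1), T (ω k.castSucc) (π (ω k.castSucc) k) (ω k.succ)
    = ∑ s' : S, T s (π s 0) s' *
        ∑ τ ∈ Finset.univ.filter (fun τ : Fin (n + 1) → S => τ 0 = s' ∧ P τ),
          ∏ k : Fin n, T (τ k.castSucc) (π (τ k.castSucc) ((k : ℕ) + 1)) (τ k.succ) := by
  have hr : ∀ s' : S,
      T s (π s 0) s' *
        ∑ τ ∈ Finset.univ.filter (fun τ : Fin (n + 1) → S => τ 0 = s' ∧ P τ),
          ∏ k : Fin n, T (τ k.castSucc) (π (τ k.castSucc) ((k : ℕ) + 1)) (τ k.succ)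
      = ∑ τ ∈ (Finset.univ.filter P).filter (fun τ => τ 0 = s'),
          T s (π s 0) (τ 0) *
            ∏ k : Fin n, T (τ k.castSucc) (π (τ k.castSucc) ((k : ℕ) + 1)) (τ k.succ) := by
    intro s'
    rw [Finset.mul_sum, Finset.filter_filter]
    refine Finset.sum_congr (by simp [and_comm]) fun τ hτ => ?_
    simp only [Finset.mem_filter] at hτ
    rw [hτ.2.2]
  rw [Finset.sum_congr rfl fun s' _ => hr s', Finset.sum_fiberwise]
  refine Finset.sum_nbij' (fun ω => Fin.tail ω) (fun τ => Fin.cons (α := fun _ => S) s τ) ?_ ?_ ?_ ?_ ?_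
  · intro ω hω
    simp only [Finset.mem_filter] at hω ⊢
    exact ⟨Finset.mem_univ _, hω.2.2⟩
  · intro τ hτ
    simp only [Finset.mem_filter] at hτ ⊢
    exact ⟨Finset.mem_univ _, rfl, by rw [Fin.tail_cons]; exact hτ.2⟩
  · intro ω hω
    simp only [Finset.mem_filter] at hω
    show Fin.cons s (Fin.tail ω) = ω
    rw [← hω.2.1, Fin.cons_self_tail]
  · intro τ _
    exact Fin.tail_cons _ _
  · intro ω hω
    simp only [Finset.mem_filter] at hω
    rw [Fin.prod_univ_succ]
    congr 1
    simp [hω.2.1, Fin.tail]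

lemma sum_one (T : S → U → S → ℝ) (hT1 : ∀ s u, ∑ s', T s u s' = 1) :
    ∀ (n : ℕ) (π : S → ℕ → U) (s : S),
      ∑ ω ∈ Finset.univ.filter (fun ω : Fin (n + 1) → S => ω 0 = s),
        ∏ k : Fin n, T (ω k.castSucc) (π (ω k.castSucc) k) (ω k.succ) = 1
  | 0, π, s => by
    have h : Finset.univ.filter (fun ω : Fin 1 → S => ω 0 = s) = {fun _ => s} := by
      ext ω
      simp [funext_iff, Fin.forall_fin_one]
    simp [h]
  | n + 1, π, s => by
    have h : Finset.univ.filter (fun ω : Fin (n + 1 + 1) → S => ω 0 = s)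
        = Finset.univ.filter
            (fun ω => ω 0 = s ∧ (fun _ : Fin (n + 1) → S => True) (Fin.tail ω)) := by
      apply Finset.filter_congr; simp
    rw [h, step_sum n T π s (fun _ => True)]
    have h2 : ∀ s' : S,
        ∑ τ ∈ Finset.univ.filter (fun τ : Fin (n + 1) → S => τ 0 = s' ∧ True),
          ∏ k : Fin n, T (τ k.castSucc) (π (τ k.castSucc) ((k : ℕ) + 1)) (τ k.succ) = 1 := by
      intro s'
      have h3 : Finset.univ.filter (fun τ : Fin (n + 1) → S => τ 0 = s' ∧ True)
          = Finset.univ.filter (fun τ : Fin (n + 1) → S => τ 0 = s') := by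
        apply Finset.filter_congr; simp
      rw [h3]
      exact sum_one T hT1 n (fun t k => π t (k + 1)) s'
    calc ∑ s' : S, T s (π s 0) s' *
          ∑ τ ∈ Finset.univ.filter (fun τ : Fin (n + 1) → S => τ 0 = s' ∧ True),
            ∏ k : Fin n, T (τ k.castSucc) (π (τ k.castSucc) ((k : ℕ) + 1)) (τ k.succ)
        = ∑ s' : S, T s (π s 0) s' * 1 := by
          exact Finset.sum_congr rfl fun s' _ => by rw [h2 s']
      _ = 1 := by simp [hT1]

lemma reach_mem (T : S → U → S → ℝ) (hT1 : ∀ s u, ∑ s', T s u s' = 1)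
    (n : ℕ) (B : Finset S) (π : S → ℕ → U) (s : S) (hs : s ∈ B) :
    reachProb n T B π s = 1 := by
  unfold reachProb
  have h : Finset.univ.filter (fun ω : Fin (n + 1) → S => ω 0 = s ∧ ∃ k, ω k ∈ B)
      = Finset.univ.filter (fun ω : Fin (n + 1) → S => ω 0 = s) := by
    apply Finset.filter_congr
    intro ω _
    simp only [iff_iff_implies_and_implies]
    exact ⟨fun h => h.1, fun h => ⟨h, 0, by rw [h]; exact hs⟩⟩
  rw [h]
  exact sum_one T hT1 n π s

lemma reach_zero (T : S → U → S → ℝ) (B : Finset S) (π : S → ℕ → U) (s : S)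
    (hs : s ∉ B) : reachProb 0 T B π s = 0 := by
  unfold reachProb
  have h : Finset.univ.filter (fun ω : Fin 1 → S => ω 0 = s ∧ ∃ k, ω k ∈ B) = ∅ := by
    ext ω
    simp only [Finset.mem_filter, Finset.mem_univ, true_and, Finset.notMem_empty,
      iff_false, not_and]
    rintro rfl ⟨k, hk⟩
    rw [Subsingleton.elim k 0] at hk
    exact hs hk
  rw [h, Finset.sum_empty]

lemma reach_rec (T : S → U → S → ℝ) (n : ℕ) (B : Finset S) (π : S → ℕ → U) (s : S)
    (hs : s ∉ B) :
    reachProb (n + 1) T B π s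
      = ∑ s', T s (π s 0) s' * reachProb n T B (fun t k => π t (k + 1)) s' := by
  unfold reachProb
  have h : Finset.univ.filter (fun ω : Fin (n + 1 + 1) → S => ω 0 = s ∧ ∃ k, ω k ∈ B)
      = Finset.univ.filter (fun ω : Fin (n + 1 + 1) → S =>
          ω 0 = s ∧ (fun τ : Fin (n + 1) → S => ∃ k, τ k ∈ B) (Fin.tail ω)) := by
    apply Finset.filter_congr
    intro ω _
    simp only [iff_iff_implies_and_implies]
    constructor
    · rintro ⟨h0, k, hk⟩
      refine ⟨h0, ?_⟩
      rcases Fin.eq_zero_or_eq_succ k with rfl | ⟨j, rfl⟩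
      · exact absurd (h0 ▸ hk) hs
      · exact ⟨j, hk⟩
    · rintro ⟨h0, j, hj⟩
      exact ⟨h0, j.succ, hj⟩
  rw [h, step_sum n T π s (fun τ => ∃ k, τ k ∈ B)]

section main
variable [Fintype U] [Nonempty U]

lemma reach_le (T : S → U → S → ℝ)
    (hT0 : ∀ s u s', 0 ≤ T s u s') (hT1 : ∀ s u, ∑ s', T s u s' = 1)
    (B : Finset S) (p : ℕ → S → ℝ)
    (hB : ∀ i s, s ∈ B → p i s = 1)
    (h0 : ∀ s, s ∉ B → p 0 s = 0)
    (hrec : ∀ i s, s ∉ B →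
      p (i + 1) s =
        Finset.univ.sup' Finset.univ_nonempty (fun u => ∑ s', T s u s' * p i s')) :
    ∀ (n : ℕ) (π : S → ℕ → U) (s : S), reachProb n T B π s ≤ p n s
  | 0, π, s => by
    by_cases hs : s ∈ B
    · rw [reach_mem T hT1 0 B π s hs, hB 0 s hs]
    · rw [reach_zero T B π s hs, h0 s hs]
  | n + 1, π, s => by
    by_cases hs : s ∈ B
    · rw [reach_mem T hT1 (n + 1) B π s hs, hB (n + 1) s hs]
    · rw [reach_rec T n B π s hs, hrec n s hs]
      calc ∑ s', T s (π s 0) s' * reachProb n T B (fun t k => π t (k + 1)) s'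
          ≤ ∑ s', T s (π s 0) s' * p n s' :=
            Finset.sum_le_sum fun s' _ =>
              mul_le_mul_of_nonneg_left
                (reach_le T hT0 hT1 B p hB h0 hrec n (fun t k => π t (k + 1)) s')
                (hT0 s (π s 0) s')
        _ ≤ Finset.univ.sup' Finset.univ_nonempty (fun u => ∑ s', T s u s' * p n s') :=
            Finset.le_sup' (fun u => ∑ s', T s u s' * p n s') (Finset.mem_univ (π s 0))

lemma reach_opt (T : S → U → S → ℝ) (hT1 : ∀ s u, ∑ s', T s u s' = 1)
    (B : Finset S) (p : ℕ → S → ℝ)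
    (hB : ∀ i s, s ∈ B → p i s = 1)
    (h0 : ∀ s, s ∉ B → p 0 s = 0)
    (hrec : ∀ i s, s ∉ B →
      p (i + 1) s =
        Finset.univ.sup' Finset.univ_nonempty (fun u => ∑ s', T s u s' * p i s')) :
    ∀ n : ℕ, ∃ π : S → ℕ → U, ∀ s, reachProb n T B π s = p n s
  | 0 => by
    refine ⟨fun _ _ => Classical.arbitrary U, fun s => ?_⟩
    by_cases hs : s ∈ B
    · rw [reach_mem T hT1 0 B _ s hs, hB 0 s hs]
    · rw [reach_zero T B _ s hs, h0 s hs]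
  | n + 1 => by
    obtain ⟨π, hπ⟩ := reach_opt T hT1 B p hB h0 hrec n
    choose u _ hu using fun s : S =>
      Finset.exists_mem_eq_sup' (Finset.univ_nonempty (α := U))
        (fun v => ∑ s', T s v s' * p n s')
    refine ⟨fun t k => if k = 0 then u t else π t (k - 1), fun s => ?_⟩
    by_cases hs : s ∈ B
    · rw [reach_mem T hT1 (n + 1) B _ s hs, hB (n + 1) s hs]
    · rw [reach_rec T n B _ s hs, hrec n s hs]
      have hshift : (fun t k => if k + 1 = 0 then u t else π t (k + 1 - 1)) = π := by
        funext t k; simp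
      rw [hshift, hu s]
      simp [hπ]

end main

end helpers

/-- Correctness of bounded-step reachability value iteration: `p_s^{(n)}` is the
maximum, over all Markov policies `π : S × ℕ → U`, of the probability that the induced
chain started at `s` visits `B` within `n` steps. -/
theorem stmt12 {S U : Type*} [Fintype S] [DecidableEq S] [Fintype U] [Nonempty U]
    (T : S → U → S → ℝ)
    (hT0 : ∀ s u s', 0 ≤ T s u s') (hT1 : ∀ s u, ∑ s', T s u s' = 1)
    (B : Finset S) (p : ℕ → S → ℝ)
    (hB : ∀ i s, s ∈ B → p i s = 1)
    (h0 : ∀ s, s ∉ B → p 0 s = 0)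
    (hrec : ∀ i s, s ∉ B →
      p (i + 1) s =
        Finset.univ.sup' Finset.univ_nonempty (fun u => ∑ s', T s u s' * p i s'))
    (n : ℕ) (s : S) :
    IsGreatest (Set.range fun π : S → ℕ → U => reachProb n T B π s) (p n s) := by
  obtain ⟨π, hπ⟩ := reach_opt T hT1 B p hB h0 hrec n
  constructor
  · exact ⟨π, hπ s⟩
  · rintro x ⟨π', rfl⟩
    exact reach_le T hT0 hT1 B p hB h0 hrec n π' s
end

section
/- Let V : X × X → ℝ≥0, κ̄ ∈ K∞ with (Id - κ̄) nonnegative and nondecreasing on the relevant range, and suppose the expected one-step drift satisfies E[V(x⁺, x̂⁺)] ≤ (Id - κ̄)(V(x, x̂)) + ρ̄(μ) + γ(η). If V(x, x̂) ≤ c where c := underline_α(ℓ⁻¹(ε)), and the quantization parameters satisfy γ(η) ≤ c·δ − (Id − κ̄)(c) − ρ̄(μ), then E[V(x⁺, x̂⁺)] ≤ c·δ, and hence by Markov's inequality P(V(x⁺, x̂⁺) ≤ c) ≥ 1 − δ. -/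
open MeasureTheory

/-- Core quantitative step of Theorem 6.3: let `W = V(x⁺, x̂⁺)` be the (random) value of
the incremental ISS Lyapunov function at the successor states, `v = V(x, x̂) ≤ c` where
`c = underα(ℓ⁻¹(ε))`, and suppose the drift bound `E[W] ≤ (Id-κ̄)(v) + ρ̄(μ) + γ(η)`
holds with `(Id-κ̄)` nonnegative and nondecreasing. If the quantization satisfies
`γ(η) ≤ c·δ − (Id−κ̄)(c) − ρ̄(μ)`, then `E[W] ≤ c·δ` and, by Markov's inequality,
`P(W ≤ c) ≥ 1 − δ`. -/
theorem stmt15 {Ω : Type*} [MeasurableSpace Ω]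
    (P : Measure Ω) [IsProbabilityMeasure P]
    (W : Ω → ℝ) (hWmeas : Measurable W) (hWnn : ∀ ω, 0 ≤ W ω) (hWint : Integrable W P)
    (κ : ℝ → ℝ) (v c δ rμ rη : ℝ)
    (hc : 0 < c) (hδ0 : 0 < δ) (hδ1 : δ ≤ 1)
    (hv0 : 0 ≤ v) (hvc : v ≤ c)
    (hmono : ∀ s t : ℝ, 0 ≤ s → s ≤ t → s - κ s ≤ t - κ t)
    (hnn : ∀ s : ℝ, 0 ≤ s → 0 ≤ s - κ s)
    (hrμ : 0 ≤ rμ) (hrη : 0 ≤ rη)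
    (hdrift : ∫ ω, W ω ∂P ≤ (v - κ v) + rμ + rη)
    (hquant : rη ≤ c * δ - (c - κ c) - rμ) :
    (∫ ω, W ω ∂P ≤ c * δ) ∧ 1 - δ ≤ (P {ω | W ω ≤ c}).toReal := by
  have hE : ∫ ω, W ω ∂P ≤ c * δ := by
    have := hmono v c hv0 hvc
    linarith
  refine ⟨hE, ?_⟩
  have hmarkov := mul_meas_ge_le_integral_of_nonneg
    (μ := P) (f := W) (Filter.Eventually.of_forall hWnn) hWint c
  have hPle : (P {ω | c ≤ W ω}).toReal ≤ δ :=
    le_of_mul_le_mul_left (hmarkov.trans hE) hc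
  have hcompl : {ω | W ω ≤ c}ᶜ ⊆ {ω | c ≤ W ω} := by
    intro ω hω
    exact le_of_lt (lt_of_not_ge (by simpa using hω))
  have h1 : (P {ω | W ω ≤ c}ᶜ).toReal ≤ δ := by
    refine le_trans ?_ hPle
    exact ENNReal.toReal_mono (measure_ne_top _ _) (measure_mono hcompl)
  have hmeas : MeasurableSet {ω | W ω ≤ c} := hWmeas measurableSet_Iic
  have := prob_compl_eq_one_sub (μ := P) hmeas
  have htot : (P {ω | W ω ≤ c}ᶜ).toReal = 1 - (P {ω | W ω ≤ c}).toReal := by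
    rw [this, ENNReal.toReal_sub_of_le (prob_le_one) ENNReal.one_ne_top]
    simp
  linarith [htot ▸ h1]
end
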